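/- Let g be a Lie algebra with a cobracket δ : g → g ∧ g satisfying the co-Jacobi identity. Then (g, δ) is a Lie bialgebra (i.e., δ is a 1-cocycle: δ([X,Y]) = ad_X·δ(Y) − ad_Y·δ(X)) if and only if the dual map δ* : g* ∧ g* → g* together with the dual of the bracket make g* ⊕ g into a Lie algebra (the Drinfeld double) with bracket extending those of g and g* by [X, α] = ad*_X α − ad*_α X, where ad* denotes the coadjoint actions. -/

import Mathlib

open TensorProduct

variable {K g : Type*} [Field K] [CharZero K] [LieRing g] [LieAlgebra K g]

/-- The cyclic permutation `x ⊗ y ⊗ z ↦ y ⊗ z ⊗ x`. -/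
noncomputable def cyc3 (K g : Type*) [Field K] [AddCommGroup g] [Module K g] :
    g ⊗[K] (g ⊗[K] g) →ₗ[K] g ⊗[K] (g ⊗[K] g) :=
  (TensorProduct.assoc K g g g).toLinearMap ∘ₗ
    (TensorProduct.comm K g (g ⊗[K] g)).toLinearMap

/-- Co-Jacobi identity `(1 + τ + τ²)(δ ⊗ id)δ = 0`. -/
noncomputable def CoJacobi3 (δ : g →ₗ[K] g ⊗[K] g) : Prop :=
  ∀ X : g,
    (let J : g →ₗ[K] g ⊗[K] (g ⊗[K] g) :=
      (TensorProduct.assoc K g g g).toLinearMap ∘ₗ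
        (TensorProduct.map δ LinearMap.id) ∘ₗ δ;
     J X + cyc3 K g (J X) + cyc3 K g (cyc3 K g (J X))) = 0

/-- The adjoint action of `X` on `g ⊗ g` as a derivation: `ad_X ⊗ 1 + 1 ⊗ ad_X`. -/
noncomputable def adTensor (X : g) : g ⊗[K] g →ₗ[K] g ⊗[K] g :=
  TensorProduct.map (LieAlgebra.ad K g X) LinearMap.id
    + TensorProduct.map LinearMap.id (LieAlgebra.ad K g X)

/-- The bracket on `g*` dual to the cobracket `δ`: `⟨[α,β], X⟩ = (α ⊗ β)(δ X)`. -/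
noncomputable def dualBr (δ : g →ₗ[K] g ⊗[K] g)
    (α β : Module.Dual K g) : Module.Dual K g :=
  (TensorProduct.lift (α.smulRight β)) ∘ₗ δ

/-- The coadjoint action of `α ∈ g*` on `g` (via `δ`):
`⟨β, ad*_α X⟩ = −⟨[α,β], X⟩ = −(α ⊗ β)(δ X)`. -/
noncomputable def coadStar (δ : g →ₗ[K] g ⊗[K] g) (α : Module.Dual K g) :
    g →ₗ[K] g :=
  - ((TensorProduct.lift (α.smulRight (LinearMap.id (R := K) (M := g)))) ∘ₗ δ)

/-- The coadjoint action of `X ∈ g` on `g*`: `⟨ad*_X α, Y⟩ = −⟨α, [X,Y]⟩`. -/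
noncomputable def coadG (X : g) (α : Module.Dual K g) : Module.Dual K g :=
  - (α ∘ₗ (LieAlgebra.ad K g X : g →ₗ[K] g))

/-- The Drinfeld double bracket on `g ⊕ g*`:
`[(X,α),(Y,β)] = ([X,Y] + ad*_α Y − ad*_β X, [α,β] + ad*_X β − ad*_Y α)`. -/
noncomputable def doubleBr (δ : g →ₗ[K] g ⊗[K] g)
    (u v : g × Module.Dual K g) : g × Module.Dual K g :=
  (⁅u.1, v.1⁆ + coadStar δ u.2 v.1 - coadStar δ v.2 u.1,
   dualBr δ u.2 v.2 + coadG u.1 v.2 - coadG v.1 u.2)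

/-! The bracket on `g ⊕ g*` is bilinear and its Jacobiator is cyclically symmetric, so Jacobi only
has to be checked on homogeneous triples. On `(g, g, g)` it is Jacobi for `g`; on `(g*, g*, g*)` it
is Jacobi for the bracket dual to `δ`, i.e. co-Jacobi. In the mixed triples one component says that
a coadjoint action is a representation, and the other, once paired with `g*` (resp. `g`), is the
pairing with the cocycle defect `δ⁅X, Y⁆ - (ad_X δY - ad_Y δX)`. Conversely, Jacobi on
`(X, Y, γ)` kills all pairings `⟨γ ⊗ φ, δ⁅X, Y⁆ - (ad_X δY - ad_Y δX)⟩`, and functionals `γ ⊗ φ`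
separate the points of `g ⊗ g` in finite dimension. -/

theorem TensorProduct.dualDistrib_comm {R M N : Type*} [CommSemiring R]
    [AddCommMonoid M] [Module R M] [AddCommMonoid N] [Module R N]
    (f : Module.Dual R M) (f' : Module.Dual R N) (t : M ⊗[R] N) :
    dualDistrib R N M (f' ⊗ₜ f) (TensorProduct.comm R M N t) = dualDistrib R M N (f ⊗ₜ f') t := by
  induction t using TensorProduct.induction_on with
  | zero => simp
  | tmul x y => simp [dualDistrib_apply, mul_comm]
  | add s t hs ht => simp only [map_add, hs, ht]

theorem TensorProduct.eq_zero_of_forall_dualDistrib_apply_eq_zero {R M N : Type*} [CommRing R]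
    [AddCommGroup M] [Module R M] [Module.Free R M] [Module.Finite R M]
    [AddCommGroup N] [Module R N] [Module.Free R N] [Module.Finite R N] {t : M ⊗[R] N}
    (h : ∀ (f : Module.Dual R M) (f' : Module.Dual R N), dualDistrib R M N (f ⊗ₜ f') t = 0) :
    t = 0 := by
  refine (Module.forall_dual_apply_eq_zero_iff R t).1 fun φ => ?_
  obtain ⟨s, rfl⟩ := (dualDistribEquiv R M N).surjective φ
  induction s using TensorProduct.induction_on with
  | zero => simp
  | tmul f f' => exact h f f'
  | add s s' hs hs' => simp only [map_add, LinearMap.add_apply, hs, hs', add_zero]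

section DrinfeldDouble

variable {K g : Type*} [Field K] [LieRing g] [LieAlgebra K g] {δ : g →ₗ[K] g ⊗[K] g}

lemma dualBr_apply (α β : Module.Dual K g) (X : g) :
    dualBr δ α β X = dualDistrib K g g (α ⊗ₜ β) (δ X) := by
  rw [dualBr, LinearMap.comp_apply]
  congr 1
  exact TensorProduct.ext' fun x y => by simp [dualDistrib_apply]

lemma apply_coadStar (α φ : Module.Dual K g) (X : g) :
    φ (coadStar δ α X) = - dualBr δ α φ X := by
  rw [coadStar, LinearMap.neg_apply, map_neg, dualBr_apply, LinearMap.comp_apply]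
  congr 1
  induction δ X using TensorProduct.induction_on with
  | zero => simp
  | tmul x y => simp [dualDistrib_apply]
  | add s t hs ht => simp only [map_add, hs, ht]

lemma coadG_eq_lie (X : g) (α : Module.Dual K g) : coadG X α = ⁅X, α⁆ := rfl

lemma apply_lie (φ : Module.Dual K g) (X Y : g) : φ ⁅X, Y⁆ = - ⁅X, φ⁆ Y := by
  rw [Module.Dual.lie_apply, neg_neg]

lemma apply_lie_swap (φ : Module.Dual K g) (X Y : g) : φ ⁅Y, X⁆ = ⁅X, φ⁆ Y := by
  rw [Module.Dual.lie_apply, ← lie_skew, map_neg]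

lemma dualDistrib_adTensor (α β : Module.Dual K g) (X : g) (t : g ⊗[K] g) :
    dualDistrib K g g (α ⊗ₜ β) (adTensor X t)
      = - (dualDistrib K g g (⁅X, α⁆ ⊗ₜ β) t + dualDistrib K g g (α ⊗ₜ ⁅X, β⁆) t) := by
  induction t using TensorProduct.induction_on with
  | zero => simp
  | tmul x y =>
    simp only [adTensor, LinearMap.add_apply, map_tmul, LieAlgebra.ad_apply, LinearMap.id_coe,
      id_eq, map_add, dualDistrib_apply, Module.Dual.lie_apply]
    ring
  | add s t hs ht => simp only [map_add, hs, ht]; ring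

lemma coadStar_add (α α' : Module.Dual K g) :
    coadStar δ (α + α') = coadStar δ α + coadStar δ α' := by
  have h : lift ((α + α').smulRight LinearMap.id)
      = lift (α.smulRight LinearMap.id) + lift (α'.smulRight (LinearMap.id : g →ₗ[K] g)) :=
    TensorProduct.ext' fun x y => by simp [add_smul]
  simp only [coadStar, h, LinearMap.add_comp, neg_add]

@[simp] lemma coadStar_zero : coadStar δ (0 : Module.Dual K g) = 0 :=
  (AddMonoidHom.mk' (coadStar δ) coadStar_add).map_zero

lemma coadStar_neg (α : Module.Dual K g) : coadStar δ (-α) = - coadStar δ α :=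
  (AddMonoidHom.mk' (coadStar δ) coadStar_add).map_neg α

lemma dualBr_add_left (α α' β : Module.Dual K g) :
    dualBr δ (α + α') β = dualBr δ α β + dualBr δ α' β := by
  ext X; simp [dualBr_apply, add_tmul]

lemma dualBr_add_right (α β β' : Module.Dual K g) :
    dualBr δ α (β + β') = dualBr δ α β + dualBr δ α β' := by
  ext X; simp [dualBr_apply, tmul_add]

@[simp] lemma dualBr_zero_left (β : Module.Dual K g) : dualBr δ 0 β = 0 :=
  (AddMonoidHom.mk' (dualBr δ · β) (dualBr_add_left · · β)).map_zero

@[simp] lemma dualBr_zero_right (α : Module.Dual K g) : dualBr δ α 0 = 0 :=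
  (AddMonoidHom.mk' (dualBr δ α) (dualBr_add_right α)).map_zero

lemma dualBr_neg_right (α β : Module.Dual K g) : dualBr δ α (-β) = - dualBr δ α β :=
  (AddMonoidHom.mk' (dualBr δ α) (dualBr_add_right α)).map_neg β

lemma dualDistrib_swap (hskew : ∀ X : g, TensorProduct.comm K g g (δ X) = - δ X)
    (α β : Module.Dual K g) (X : g) :
    dualDistrib K g g (β ⊗ₜ α) (δ X) = - dualDistrib K g g (α ⊗ₜ β) (δ X) := by
  rw [← TensorProduct.dualDistrib_comm, hskew, map_neg]

lemma dualBr_swap (hskew : ∀ X : g, TensorProduct.comm K g g (δ X) = - δ X)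
    (α β : Module.Dual K g) : dualBr δ β α = - dualBr δ α β := by
  ext X
  rw [LinearMap.neg_apply, dualBr_apply, dualBr_apply, dualDistrib_swap hskew]

lemma dualBr_dualBr_swap (hskew : ∀ X : g, TensorProduct.comm K g g (δ X) = - δ X)
    (α β γ : Module.Dual K g) : dualBr δ (dualBr δ α β) γ = dualBr δ γ (dualBr δ β α) := by
  rw [dualBr_swap hskew γ, dualBr_swap hskew α, dualBr_neg_right]

lemma dualDistrib_cyc3 (α β γ : Module.Dual K g) (t : g ⊗[K] (g ⊗[K] g)) :
    dualDistrib K g (g ⊗[K] g) (α ⊗ₜ dualDistrib K g g (β ⊗ₜ γ)) (cyc3 K g t)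
      = dualDistrib K g (g ⊗[K] g) (γ ⊗ₜ dualDistrib K g g (α ⊗ₜ β)) t := by
  induction t using TensorProduct.induction_on with
  | zero => simp
  | add s t hs ht => simp only [map_add, hs, ht]
  | tmul x t =>
    induction t using TensorProduct.induction_on with
    | zero => simp
    | add s t hs ht => simp only [tmul_add, map_add, hs, ht]
    | tmul y z =>
      simp only [cyc3, LinearEquiv.comp_coe, LinearEquiv.coe_coe, LinearEquiv.trans_apply,
        comm_tmul, assoc_tmul, dualDistrib_apply]
      ring

lemma dualDistrib_assoc_map (α β γ : Module.Dual K g) (t : g ⊗[K] g) :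
    dualDistrib K g (g ⊗[K] g) (α ⊗ₜ dualDistrib K g g (β ⊗ₜ γ))
        (TensorProduct.assoc K g g g (TensorProduct.map δ LinearMap.id t))
      = dualDistrib K g g (dualBr δ α β ⊗ₜ γ) t := by
  induction t using TensorProduct.induction_on with
  | zero => simp
  | add s t hs ht => simp only [map_add, hs, ht]
  | tmul x y =>
    simp only [TensorProduct.map_tmul, LinearMap.id_apply, dualDistrib_apply, dualBr_apply]
    induction δ x using TensorProduct.induction_on with
    | zero => simp
    | add s t hs ht => simp only [add_tmul, map_add, hs, ht, add_mul]
    | tmul a b => simp only [assoc_tmul, dualDistrib_apply]; ring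

theorem dualBr_jacobi (hcojac : CoJacobi3 δ) (α β γ : Module.Dual K g) :
    dualBr δ (dualBr δ α β) γ + dualBr δ (dualBr δ γ α) β + dualBr δ (dualBr δ β γ) α = 0 := by
  ext X
  have h := congrArg (dualDistrib K g (g ⊗[K] g) (α ⊗ₜ dualDistrib K g g (β ⊗ₜ γ))) (hcojac X)
  simp only [map_add, map_zero, dualDistrib_cyc3, LinearMap.comp_apply, LinearEquiv.coe_coe,
    dualDistrib_assoc_map] at h
  simpa only [LinearMap.add_apply, LinearMap.zero_apply, dualBr_apply] using h

lemma coadStar_dualBr (hskew : ∀ X : g, TensorProduct.comm K g g (δ X) = - δ X)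
    (hcojac : CoJacobi3 δ) (α β : Module.Dual K g) (X : g) :
    coadStar δ (dualBr δ α β) X
      = coadStar δ α (coadStar δ β X) - coadStar δ β (coadStar δ α X) := by
  rw [← sub_eq_zero, ← Module.forall_dual_apply_eq_zero_iff K]
  intro φ
  have hJ := LinearMap.congr_fun (dualBr_jacobi hcojac α β φ) X
  rw [dualBr_dualBr_swap hskew φ α β, dualBr_swap hskew α] at hJ
  simp only [LinearMap.add_apply, LinearMap.neg_apply, LinearMap.zero_apply] at hJ
  simp only [map_sub, apply_coadStar, neg_neg]
  linear_combination -hJ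

lemma doubleBr_add_left (u u' v : g × Module.Dual K g) :
    doubleBr δ (u + u') v = doubleBr δ u v + doubleBr δ u' v := by
  simp only [doubleBr, coadG_eq_lie, Prod.fst_add, Prod.snd_add, add_lie, map_add, coadStar_add,
    dualBr_add_left, lie_add, LinearMap.add_apply, Prod.mk_add_mk]
  congr 1 <;> abel

lemma doubleBr_add_right (u v v' : g × Module.Dual K g) :
    doubleBr δ u (v + v') = doubleBr δ u v + doubleBr δ u v' := by
  simp only [doubleBr, coadG_eq_lie, Prod.fst_add, Prod.snd_add, add_lie, map_add, coadStar_add,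
    dualBr_add_right, lie_add, LinearMap.add_apply, Prod.mk_add_mk]
  congr 1 <;> abel

lemma doubleBr_swap (hskew : ∀ X : g, TensorProduct.comm K g g (δ X) = - δ X)
    (u v : g × Module.Dual K g) : doubleBr δ v u = - doubleBr δ u v := by
  simp only [doubleBr, Prod.neg_mk, Prod.mk.injEq, dualBr_swap hskew u.2, ← lie_skew u.1]
  constructor <;> abel

noncomputable def jacobiator (δ : g →ₗ[K] g ⊗[K] g) (u v w : g × Module.Dual K g) :
    g × Module.Dual K g :=
  doubleBr δ u (doubleBr δ v w) + doubleBr δ v (doubleBr δ w u) + doubleBr δ w (doubleBr δ u v)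

lemma jacobiator_rotate (u v w : g × Module.Dual K g) :
    jacobiator δ u v w = jacobiator δ v w u := by
  simp only [jacobiator]; abel

lemma jacobiator_add_left (u u' v w : g × Module.Dual K g) :
    jacobiator δ (u + u') v w = jacobiator δ u v w + jacobiator δ u' v w := by
  simp only [jacobiator, doubleBr_add_left, doubleBr_add_right]; abel

lemma jacobiator_add_middle (u v v' w : g × Module.Dual K g) :
    jacobiator δ u (v + v') w = jacobiator δ u v w + jacobiator δ u v' w := by
  rw [jacobiator_rotate, jacobiator_add_left, ← jacobiator_rotate u v, ← jacobiator_rotate u v']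

lemma jacobiator_add_right (u v w w' : g × Module.Dual K g) :
    jacobiator δ u v (w + w') = jacobiator δ u v w + jacobiator δ u v w' := by
  rw [← jacobiator_rotate, jacobiator_add_left, jacobiator_rotate _ u, jacobiator_rotate _ u]

noncomputable def cocycleDefect (δ : g →ₗ[K] g ⊗[K] g) (X Y : g) : g ⊗[K] g :=
  δ ⁅X, Y⁆ - (adTensor X (δ Y) - adTensor Y (δ X))

lemma cocycleDefect_eq_zero_iff (X Y : g) :
    cocycleDefect δ X Y = 0 ↔ δ ⁅X, Y⁆ = adTensor X (δ Y) - adTensor Y (δ X) :=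
  sub_eq_zero

lemma jacobiator_inl_inl_inl (X Y Z : g) :
    jacobiator δ (X, 0) (Y, 0) (Z, 0) = 0 := by
  simp [jacobiator, doubleBr, coadG_eq_lie, lie_jacobi]

lemma apply_jacobiator_inl_inl_inr_fst (X Y : g) (γ φ : Module.Dual K g) :
    φ (jacobiator δ (X, 0) (Y, 0) (0, γ)).1
      = - dualDistrib K g g (γ ⊗ₜ φ) (cocycleDefect δ X Y) := by
  simp only [jacobiator, doubleBr, coadG_eq_lie, coadStar_zero, dualBr_zero_left,
    dualBr_zero_right, coadStar_neg, LinearMap.neg_apply, lie_zero, zero_lie, lie_neg, map_zero,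
    LinearMap.zero_apply, add_zero, sub_zero, zero_sub, zero_add, neg_zero, Prod.fst_add, map_add,
    map_sub, map_neg]
  rw [apply_lie φ X, apply_lie φ Y]
  simp only [apply_coadStar, dualBr_apply, cocycleDefect, map_sub, dualDistrib_adTensor]
  ring

lemma jacobiator_inl_inl_inr_snd (X Y : g) (γ : Module.Dual K g) :
    (jacobiator δ (X, 0) (Y, 0) (0, γ)).2 = 0 := by
  simp only [jacobiator, doubleBr, coadG_eq_lie, coadStar_zero, dualBr_zero_left,
    dualBr_zero_right, lie_zero, zero_lie, lie_neg, LinearMap.zero_apply, add_zero, sub_zero,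
    zero_sub, zero_add, Prod.mk_add_mk, lie_lie]
  abel

lemma jacobiator_inl_inr_inr_fst (hskew : ∀ X : g, TensorProduct.comm K g g (δ X) = - δ X)
    (hcojac : CoJacobi3 δ) (X : g) (β γ : Module.Dual K g) :
    (jacobiator δ (X, 0) (0, β) (0, γ)).1 = 0 := by
  simp [jacobiator, doubleBr, coadG_eq_lie, coadStar_dualBr hskew hcojac]

lemma jacobiator_inl_inr_inr_snd_apply (hskew : ∀ X : g, TensorProduct.comm K g g (δ X) = - δ X)
    (X : g) (β γ : Module.Dual K g) (Z : g) :
    (jacobiator δ (X, 0) (0, β) (0, γ)).2 Z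
      = - dualDistrib K g g (β ⊗ₜ γ) (cocycleDefect δ X Z) := by
  simp only [jacobiator, doubleBr, coadG_eq_lie, coadStar_zero, lie_zero, zero_lie, map_zero,
    neg_lie, add_zero, sub_zero, zero_sub, zero_add, Prod.snd_add, dualBr_zero_left,
    dualBr_zero_right, LinearMap.add_apply, LinearMap.sub_apply, LinearMap.neg_apply,
    Module.Dual.lie_apply, map_neg, dualBr_neg_right]
  rw [apply_lie_swap β Z, apply_lie_swap γ Z]
  simp only [apply_coadStar, dualBr_apply, cocycleDefect, map_sub, dualDistrib_adTensor]
  linear_combination dualDistrib_swap hskew ⁅X, β⁆ γ Z - dualDistrib_swap hskew ⁅Z, β⁆ γ X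

lemma jacobiator_inr_inr_inr (hskew : ∀ X : g, TensorProduct.comm K g g (δ X) = - δ X)
    (hcojac : CoJacobi3 δ) (α β γ : Module.Dual K g) :
    jacobiator δ (0, α) (0, β) (0, γ) = 0 := by
  have h := dualBr_jacobi hcojac α β γ
  rw [dualBr_swap hskew γ (dualBr δ α β), dualBr_swap hskew β (dualBr δ γ α),
    dualBr_swap hskew α (dualBr δ β γ)] at h
  simp only [jacobiator, doubleBr, coadG_eq_lie, lie_zero, zero_lie, map_zero, add_zero,
    sub_zero, Prod.mk_add_mk, Prod.mk_eq_zero, true_and]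
  rw [← neg_eq_zero, ← h]
  abel

lemma jacobiator_inl_inl_inr (hcoc : ∀ X Y : g, δ ⁅X, Y⁆ = adTensor X (δ Y) - adTensor Y (δ X))
    (X Y : g) (γ : Module.Dual K g) : jacobiator δ (X, 0) (Y, 0) (0, γ) = 0 := by
  refine Prod.ext ((Module.forall_dual_apply_eq_zero_iff K _).1 fun φ => ?_)
    (jacobiator_inl_inl_inr_snd X Y γ)
  rw [apply_jacobiator_inl_inl_inr_fst, (cocycleDefect_eq_zero_iff X Y).2 (hcoc X Y), map_zero,
    neg_zero]

lemma jacobiator_inl_inr_inr (hskew : ∀ X : g, TensorProduct.comm K g g (δ X) = - δ X)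
    (hcojac : CoJacobi3 δ) (hcoc : ∀ X Y : g, δ ⁅X, Y⁆ = adTensor X (δ Y) - adTensor Y (δ X))
    (X : g) (β γ : Module.Dual K g) : jacobiator δ (X, 0) (0, β) (0, γ) = 0 := by
  refine Prod.ext (jacobiator_inl_inr_inr_fst hskew hcojac X β γ) (LinearMap.ext fun Z => ?_)
  rw [jacobiator_inl_inr_inr_snd_apply hskew, (cocycleDefect_eq_zero_iff X Z).2 (hcoc X Z),
    map_zero, neg_zero, Prod.snd_zero, LinearMap.zero_apply]

theorem jacobiator_eq_zero (hskew : ∀ X : g, TensorProduct.comm K g g (δ X) = - δ X)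
    (hcojac : CoJacobi3 δ) (hcoc : ∀ X Y : g, δ ⁅X, Y⁆ = adTensor X (δ Y) - adTensor Y (δ X))
    (u v w : g × Module.Dual K g) : jacobiator δ u v w = 0 := by
  have split (u : g × Module.Dual K g) : u = (u.1, 0) + (0, u.2) := by simp
  rw [split u, split v, split w]
  simp only [jacobiator_add_left, jacobiator_add_middle, jacobiator_add_right]
  rw [jacobiator_rotate (0, u.2) (v.1, 0) (w.1, 0), jacobiator_rotate (0, u.2) (v.1, 0) (0, w.2),
    jacobiator_rotate (0, u.2) (0, v.2), jacobiator_rotate (0, v.2) (w.1, 0),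
    jacobiator_rotate (u.1, 0) (0, v.2) (w.1, 0), jacobiator_rotate (0, v.2) (w.1, 0)]
  simp only [jacobiator_inl_inl_inl, jacobiator_inl_inl_inr hcoc,
    jacobiator_inl_inr_inr hskew hcojac hcoc, jacobiator_inr_inr_inr hskew hcojac, add_zero]

end DrinfeldDouble

/-- for a finite-dimensional Lie algebra `g` with a cobracket `δ`
satisfying co-Jacobi, `δ` is a 1-cocycle (i.e. `(g,δ)` is a Lie bialgebra) if and
only if the Drinfeld double bracket makes `g ⊕ g*` a Lie algebra (antisymmetry and
the Jacobi identity hold). -/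
theorem lie_bialgebra_iff_drinfeld_double [FiniteDimensional K g]
    (δ : g →ₗ[K] g ⊗[K] g)
    (hskew : ∀ X : g, TensorProduct.comm K g g (δ X) = - δ X)
    (hcojac : CoJacobi3 δ) :
    (∀ X Y : g, δ ⁅X, Y⁆ = adTensor X (δ Y) - adTensor Y (δ X))
      ↔ ((∀ u v : g × Module.Dual K g, doubleBr δ u v = - doubleBr δ v u) ∧
         (∀ u v w : g × Module.Dual K g,
            doubleBr δ u (doubleBr δ v w) + doubleBr δ v (doubleBr δ w u)
              + doubleBr δ w (doubleBr δ u v) = 0)) := by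
  refine ⟨fun hcoc => ⟨fun u v => doubleBr_swap hskew v u, jacobiator_eq_zero hskew hcojac hcoc⟩,
    fun ⟨_, hjac⟩ X Y => ?_⟩
  rw [← cocycleDefect_eq_zero_iff]
  refine TensorProduct.eq_zero_of_forall_dualDistrib_apply_eq_zero fun γ φ => ?_
  have h : jacobiator δ (X, 0) (Y, 0) (0, γ) = 0 := hjac _ _ _
  rw [← neg_eq_zero, ← apply_jacobiator_inl_inl_inr_fst, h, Prod.fst_zero, map_zero]
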